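/- arXiv:1602.08593 — 3 statements merged into one kernel-verified Lean document; each statement's English description precedes it below -/
import Mathlib

section
/- Let P ⊆ ℝ^d be a full-dimensional polytope and let x ∈ ℝ^d be a point of P. Let K = ⋃_{s>0} s·(P − x) be the cone subtended by P at x. Then the ratio vol(B(x,r) ∩ P)/vol(B(x,r)) converges as r → 0+ to the Gaussian measure ∫_K e^{−π‖v‖²} dv of the cone K. In particular the solid angle ω_P(x) exists and equals ∫_K e^{−π‖v‖²} dv. -/
/-!
Near `x` the polytope `P` coincides with the cone `x + K`. Write points of `P - x` with barycentric
weights: by compactness of the simplex, the weights of a point close to `0` dominate half of some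
weights of `0`, and subtracting those shows that small points of `P - x` can be doubled inside
`P - x`; hence small points of `K` lie in `P - x`. So for small `r` the ratio is
`vol (B(0,1) ∩ K) / vol (B(0,1))`, by the homogeneity `vol (B(0,ρ) ∩ K) = ρ ^ d vol (B(0,1) ∩ K)`.
The same homogeneity and the layer-cake formula make the Gaussian integral over `K` that same
fraction of the Gaussian integral over the whole space, which is `1`.
-/

open MeasureTheory Metric Filter Pointwise Set Topology

section Module

variable {V : Type*} [AddCommGroup V] [Module ℝ V]

def conicHull (Q : Set V) : Set V := ⋃ s ∈ Ioi (0 : ℝ), s • Q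

theorem mem_conicHull {Q : Set V} {v : V} : v ∈ conicHull Q ↔ ∃ s : ℝ, 0 < s ∧ v ∈ s • Q := by
  simp [conicHull]

theorem subset_conicHull (Q : Set V) : Q ⊆ conicHull Q :=
  fun q hq => mem_conicHull.2 ⟨1, one_pos, by rwa [one_smul]⟩

theorem smul_conicHull_subset {Q : Set V} {r : ℝ} (hr : 0 < r) :
    r • conicHull Q ⊆ conicHull Q := by
  rintro _ ⟨v, hv, rfl⟩
  obtain ⟨s, hs, hv⟩ := mem_conicHull.1 hv
  exact mem_conicHull.2 ⟨r * s, mul_pos hr hs, by rw [mul_smul]; exact smul_mem_smul_set hv⟩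

theorem smul_conicHull {Q : Set V} {r : ℝ} (hr : 0 < r) : r • conicHull Q = conicHull Q := by
  refine (smul_conicHull_subset hr).antisymm fun v hv => ?_
  refine ⟨r⁻¹ • v, smul_conicHull_subset (inv_pos.2 hr) (smul_mem_smul_set hv), ?_⟩
  simp [smul_smul, hr.ne']

theorem convexHull_range_eq_image_stdSimplex {ι : Type*} [Fintype ι] (y : ι → V) :
    convexHull ℝ (range y) = Fintype.linearCombination ℝ y '' stdSimplex ℝ ι := by
  classical
  rw [← convexHull_rangle_single_eq_stdSimplex, LinearMap.image_convexHull, ← range_comp]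
  congr 2
  ext i
  simp [Fintype.linearCombination_apply, Pi.single_apply]

theorem image_sub_right_convexHull (x : V) (s : Set V) :
    (fun y => y - x) '' convexHull ℝ s = convexHull ℝ ((fun y => y - x) '' s) := by
  simp_rw [sub_eq_neg_add, ← vadd_eq_add, image_vadd, convexHull_vadd]

end Module

section NormedSpace

variable {V : Type*} [NormedAddCommGroup V] [NormedSpace ℝ V]

theorem eventually_two_smul_mem_convexHull_range {ι : Type*} [Fintype ι] (y : ι → V) :
    ∀ᶠ w in 𝓝 0, w ∈ convexHull ℝ (range y) → (2 : ℝ) • w ∈ convexHull ℝ (range y) := by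
  set L := Fintype.linearCombination ℝ y
  have hL : Continuous L := L.continuous_of_finiteDimensional
  rw [convexHull_range_eq_image_stdSimplex]
  -- if `L γ = w` and `L z = 0` with `z ≤ 2 γ`, then `2 γ - z` is a weight vector of `2 • w`
  set U : Set (ι → ℝ) :=
    ⋃ z ∈ stdSimplex ℝ ι ∩ L ⁻¹' {0}, {γ | ∀ i, z i < 2 * γ i ∨ z i = 0}
  have hU : IsOpen U := by
    refine isOpen_biUnion fun z _ => ?_
    simp only [ofPred_forall]
    refine isOpen_iInter_of_finite fun i => ?_
    by_cases hi : z i = 0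
    · simp [hi]
    · simpa [hi] using isOpen_lt continuous_const (continuous_const.mul (continuous_apply i))
  have hF : IsClosed (L '' (stdSimplex ℝ ι \ U)) :=
    ((isCompact_stdSimplex ℝ ι).diff hU).image hL |>.isClosed
  have h0F : (0 : V) ∉ L '' (stdSimplex ℝ ι \ U) := by
    rintro ⟨γ, ⟨hγ, hγU⟩, hγ0⟩
    refine hγU (mem_biUnion ⟨hγ, hγ0⟩ fun i => ?_)
    rcases (hγ.1 i).lt_or_eq with h | h
    · left; linarith
    · right; exact h.symm
  filter_upwards [hF.isOpen_compl.mem_nhds h0F] with w hwF hw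
  obtain ⟨γ, hγ, rfl⟩ := hw
  obtain ⟨z, ⟨hz, hz0⟩, hzγ⟩ := mem_iUnion₂.1 (not_not.1 fun hγU => hwF ⟨γ, ⟨hγ, hγU⟩, rfl⟩)
  refine ⟨(2 : ℝ) • γ - z, ⟨fun i => ?_, ?_⟩, ?_⟩
  · rcases hzγ i with h | h <;> simp <;> linarith [hγ.1 i]
  · norm_num [Finset.sum_sub_distrib, ← Finset.mul_sum, hγ.2, hz.2]
  · rw [map_sub, map_smul, show L z = 0 from hz0, sub_zero]

theorem eventually_mem_of_mem_conicHull {Q : Set V} (hQ : StarConvex ℝ 0 Q)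
    (h2 : ∀ᶠ w in 𝓝 0, w ∈ Q → (2 : ℝ) • w ∈ Q) :
    ∀ᶠ v in 𝓝 0, v ∈ conicHull Q → v ∈ Q := by
  obtain ⟨ε, hε, h2⟩ := Metric.eventually_nhds_iff_ball.1 h2
  have hdouble : ∀ k : ℕ, ∀ v ∈ Metric.ball (0 : V) ε, (2⁻¹ : ℝ) ^ k • v ∈ Q → v ∈ Q := by
    intro k
    induction k with
    | zero => simp
    | succ k ih =>
      intro v hv hk
      have hhalf : (2⁻¹ : ℝ) • v ∈ Metric.ball (0 : V) ε := by
        refine mem_ball_zero_iff.2 (lt_of_le_of_lt ?_ (mem_ball_zero_iff.1 hv))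
        rw [norm_smul]; norm_num; linarith [norm_nonneg v]
      have := h2 _ hhalf (ih _ hhalf (by rwa [smul_smul, ← pow_succ]))
      rwa [smul_smul, mul_inv_cancel₀ two_ne_zero, one_smul] at this
  filter_upwards [Metric.ball_mem_nhds (0 : V) hε] with v hv hvK
  obtain ⟨s, hs, q, hq, rfl⟩ := mem_conicHull.1 hvK
  obtain ⟨k, hk⟩ := pow_unbounded_of_one_lt s one_lt_two
  refine hdouble k _ hv ?_
  rw [smul_smul, inv_pow, ← div_eq_inv_mul]
  exact hQ.smul_mem hq (by positivity) ((div_le_one (by positivity)).2 hk.le)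

theorem eventually_mem_convexHull_of_mem_conicHull {ι : Type*} [Fintype ι] {y : ι → V}
    (h0 : (0 : V) ∈ convexHull ℝ (range y)) :
    ∀ᶠ v in 𝓝 0, v ∈ conicHull (convexHull ℝ (range y)) → v ∈ convexHull ℝ (range y) :=
  eventually_mem_of_mem_conicHull ((convex_convexHull ℝ _).starConvex h0)
    (eventually_two_smul_mem_convexHull_range y)

theorem eventually_ball_inter_eq_ball_inter_conicHull {Q : Set V}
    (hQ : ∀ᶠ v in 𝓝 0, v ∈ conicHull Q → v ∈ Q) :
    ∀ᶠ r in 𝓝[>] 0, ball 0 r ∩ Q = ball 0 r ∩ conicHull Q := by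
  obtain ⟨ε, hε, hQ⟩ := Metric.eventually_nhds_iff_ball.1 hQ
  filter_upwards [Ioo_mem_nhdsGT hε] with r hr
  refine subset_antisymm (inter_subset_inter_right _ (subset_conicHull Q)) fun v ⟨hv, hvK⟩ =>
    ⟨hv, hQ v (ball_subset_ball hr.2.le hv) hvK⟩

end NormedSpace

theorem setOf_lt_exp_neg_pi_mul_sq_norm {V : Type*} [SeminormedAddCommGroup V] {t : ℝ}
    (ht : 0 < t) :
    {v : V | t < Real.exp (-Real.pi * ‖v‖ ^ 2)} = ball 0 (√(Real.log t⁻¹ / Real.pi)) := by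
  ext v
  rw [mem_ofPred_eq, mem_ball_zero_iff, Real.lt_sqrt (norm_nonneg v),
    ← Real.log_lt_iff_lt_exp ht, lt_div_iff₀ Real.pi_pos, Real.log_inv]
  constructor <;> intro h <;> linarith

theorem measure_ball_zero_inter_image_sub_right {E : Type*} [NormedAddCommGroup E]
    [MeasurableSpace E] [MeasurableAdd E] (μ : Measure E) [μ.IsAddRightInvariant]
    (x : E) (r : ℝ) (A : Set E) :
    μ (ball 0 r ∩ (fun y => y - x) '' A) = μ (ball x r ∩ A) := by
  rw [image_sub_right, ← sub_self x, ← preimage_add_right_ball, ← preimage_inter,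
    measure_preimage_add_right]

section ConeMeasure

variable {E : Type*} [NormedAddCommGroup E] [NormedSpace ℝ E] [FiniteDimensional ℝ E]
  [MeasurableSpace E] [BorelSpace E] (μ : Measure E) [μ.IsAddHaarMeasure]

theorem addHaar_ball_inter_mul_eq_of_smul_eq {K : Set E} (hK : ∀ r : ℝ, 0 < r → r • K = K)
    (ρ : ℝ) : μ (ball 0 ρ ∩ K) * μ (ball 0 1) = μ (ball 0 1 ∩ K) * μ (ball 0 ρ) := by
  rcases le_or_gt ρ 0 with hρ | hρ
  · simp [ball_eq_empty.2 hρ]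
  have hscale : ball (0 : E) ρ ∩ K = ρ • (ball 0 1 ∩ K) := by
    rw [smul_set_inter₀ hρ.ne', smul_unitBall_of_pos hρ, hK ρ hρ]
  rw [hscale, Measure.addHaar_smul_of_nonneg μ hρ.le, Measure.addHaar_ball_of_pos μ 0 hρ]
  ring

theorem lintegral_restrict_mul_eq_of_smul_eq {K : Set E} (hK : ∀ r : ℝ, 0 < r → r • K = K)
    {f : E → ℝ} (hf0 : 0 ≤ f) (hfm : Measurable f)
    (hf : ∀ t : ℝ, 0 < t → ∃ ρ, {v | t < f v} = ball 0 ρ) :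
    (∫⁻ v in K, ENNReal.ofReal (f v) ∂μ) * μ (ball 0 1) =
      μ (ball 0 1 ∩ K) * ∫⁻ v, ENNReal.ofReal (f v) ∂μ := by
  rw [lintegral_eq_lintegral_meas_lt _ (ae_of_all _ hf0) hfm.aemeasurable,
    lintegral_eq_lintegral_meas_lt _ (ae_of_all _ hf0) hfm.aemeasurable,
    ← lintegral_mul_const' _ _ measure_ball_lt_top.ne,
    ← lintegral_const_mul' _ _ (measure_ne_top_of_subset inter_subset_left measure_ball_lt_top.ne)]
  refine setLIntegral_congr_fun measurableSet_Ioi fun t ht => ?_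
  obtain ⟨ρ, hρ⟩ := hf t ht
  rw [hρ, Measure.restrict_apply measurableSet_ball, addHaar_ball_inter_mul_eq_of_smul_eq μ hK]

theorem toReal_addHaar_ball_inter_div_eq_of_smul_eq {K : Set E}
    (hK : ∀ r : ℝ, 0 < r → r • K = K) {ρ : ℝ} (hρ : 0 < ρ) :
    (μ (ball 0 ρ ∩ K)).toReal / (μ (ball 0 ρ)).toReal =
      (μ (ball 0 1 ∩ K)).toReal / (μ (ball 0 1)).toReal := by
  have hball : ∀ r > 0, (μ (ball (0 : E) r)).toReal ≠ 0 := fun r hr =>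
    (ENNReal.toReal_pos (measure_ball_pos μ 0 hr).ne' measure_ball_lt_top.ne).ne'
  rw [div_eq_div_iff (hball ρ hρ) (hball 1 one_pos), ← ENNReal.toReal_mul, ← ENNReal.toReal_mul,
    addHaar_ball_inter_mul_eq_of_smul_eq μ hK]

end ConeMeasure

section Gaussian

variable {V : Type*} [NormedAddCommGroup V] [InnerProductSpace ℝ V] [FiniteDimensional ℝ V]
  [MeasurableSpace V] [BorelSpace V]

theorem lintegral_exp_neg_pi_mul_sq_norm :
    ∫⁻ v : V, ENNReal.ofReal (Real.exp (-Real.pi * ‖v‖ ^ 2)) = 1 := by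
  rw [← ENNReal.toReal_eq_one_iff, ← integral_eq_lintegral_of_nonneg_ae
    (ae_of_all _ fun v => (Real.exp_pos _).le) (by fun_prop),
    GaussianFourier.integral_rexp_neg_mul_sq_norm Real.pi_pos, div_self Real.pi_ne_zero,
    Real.one_rpow]

theorem setIntegral_exp_neg_pi_mul_sq_norm_of_smul_eq {K : Set V}
    (hK : ∀ r : ℝ, 0 < r → r • K = K) :
    ∫ v in K, Real.exp (-Real.pi * ‖v‖ ^ 2) =
      (volume (ball (0 : V) 1 ∩ K)).toReal / (volume (ball (0 : V) 1)).toReal := by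
  have hgauss : Continuous fun v : V => Real.exp (-Real.pi * ‖v‖ ^ 2) := by fun_prop
  have hlayer := lintegral_restrict_mul_eq_of_smul_eq volume hK (fun v => (Real.exp_pos _).le)
    hgauss.measurable fun t ht => ⟨_, setOf_lt_exp_neg_pi_mul_sq_norm ht⟩
  rw [lintegral_exp_neg_pi_mul_sq_norm, mul_one, mul_comm, ← ENNReal.eq_div_iff
    (measure_ball_pos volume 0 one_pos).ne' measure_ball_lt_top.ne] at hlayer
  rw [integral_eq_lintegral_of_nonneg_ae (ae_of_all _ fun v => (Real.exp_pos _).le)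
    hgauss.aestronglyMeasurable, hlayer, ENNReal.toReal_div]

end Gaussian

theorem solid_angle_eq_gaussian_measure_of_cone_general
    (d : ℕ) (P : Set (EuclideanSpace ℝ (Fin d)))
    (S : Finset (EuclideanSpace ℝ (Fin d)))
    (hP : P = convexHull ℝ (S : Set (EuclideanSpace ℝ (Fin d))))
    (x : EuclideanSpace ℝ (Fin d)) (hx : x ∈ P)
    (K : Set (EuclideanSpace ℝ (Fin d)))
    (hK : K = ⋃ s ∈ Set.Ioi (0 : ℝ), s • ((fun y => y - x) '' P)) :
    Tendsto
      (fun r : ℝ => (volume (ball x r ∩ P)).toReal / (volume (ball x r)).toReal)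
      (nhdsWithin 0 (Set.Ioi 0))
      (nhds (∫ v in K, Real.exp (-Real.pi * ‖v‖ ^ 2))) := by
  have hQ : (fun y => y - x) '' P =
      convexHull ℝ (range fun i : S => (i : EuclideanSpace ℝ (Fin d)) - x) := by
    rw [hP, image_sub_right_convexHull]
    congr 1
    ext v
    simp
  have h0 : 0 ∈ (fun y => y - x) '' P := ⟨x, hx, sub_self x⟩
  set Q := (fun y => y - x) '' P
  obtain rfl : K = conicHull Q := hK
  have hlocal := eventually_mem_convexHull_of_mem_conicHull (hQ ▸ h0)
  rw [← hQ] at hlocal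
  rw [setIntegral_exp_neg_pi_mul_sq_norm_of_smul_eq fun _ => smul_conicHull]
  refine tendsto_const_nhds.congr' ?_
  filter_upwards [eventually_ball_inter_eq_ball_inter_conicHull hlocal, self_mem_nhdsWithin]
    with r hr (hr0 : 0 < r)
  rw [← measure_ball_zero_inter_image_sub_right volume x r P, hr,
    Measure.addHaar_ball_center volume x r,
    toReal_addHaar_ball_inter_div_eq_of_smul_eq volume (fun _ => smul_conicHull) hr0]

/-- For a full-dimensional polytope `P ⊆ ℝ^d` and a point `x ∈ P`,
the ratio `vol(B(x,r) ∩ P)/vol(B(x,r))` converges as `r → 0+` to the Gaussian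
measure `∫_K e^{−π‖v‖²} dv` of the cone `K = ⋃_{s>0} s • (P − x)` subtended by `P` at `x`. -/
theorem solid_angle_eq_gaussian_measure_of_cone
    (d : ℕ) (P : Set (EuclideanSpace ℝ (Fin d)))
    (S : Finset (EuclideanSpace ℝ (Fin d)))
    (hP : P = convexHull ℝ (S : Set (EuclideanSpace ℝ (Fin d))))
    (hfull : (interior P).Nonempty)
    (x : EuclideanSpace ℝ (Fin d)) (hx : x ∈ P)
    (K : Set (EuclideanSpace ℝ (Fin d)))
    (hK : K = ⋃ s ∈ Set.Ioi (0 : ℝ), s • ((fun y => y - x) '' P)) :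
    Tendsto
      (fun r : ℝ => (volume (ball x r ∩ P)).toReal / (volume (ball x r)).toReal)
      (nhdsWithin 0 (Set.Ioi 0))
      (nhds (∫ v in K, Real.exp (-Real.pi * ‖v‖ ^ 2))) :=
  solid_angle_eq_gaussian_measure_of_cone_general d P S hP x hx K hK
end

section
/- Let P ⊆ ℝ^d be a full-dimensional polytope. Then for every point x ∈ P, the Gaussian smoothing (1_P ∗ G_ε)(x) converges, as ε → 0+, to the Gaussian measure ∫_K e^{−π‖v‖²} dv of the cone K = ⋃_{s>0} s·(P − x) subtended by P at x; for x ∉ P it converges to 0. Consequently lim_{ε→0+} (1_P ∗ G_ε)(x) = ω_P(x) for every x ∈ ℝ^d. -/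
/-!
Substituting `v = (y - x) / √ε` turns `(1_P ∗ G_ε)(x)` into the Gaussian measure of
`ε^{-1/2} • (P - x)`. For `x ∈ P` these dilates of the convex set `P - x ∋ 0` increase as `ε ↓ 0`
and exhaust the cone `K`, so by continuity of measure the Gaussian measure tends to that of `K`;
for `x ∉ P` the kernel is at most `ε^{-d/2} e^{-πδ²/ε}` on `P`, with `δ` the distance from `x`
to `P`. In the same way `vol(B(x,r) ∩ P) / vol(B(x,r)) = vol(B(0,1) ∩ r⁻¹ • (P - x)) / vol(B(0,1))`
tends to `vol(B(0,1) ∩ K) / vol(B(0,1))`, and for a cone this ratio is its Gaussian measure: by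
the layer-cake formula over the superlevel sets `B(0,R)` of the Gaussian, both only depend on the
volumes of `K ∩ B(0,R)`, which scale like `R^d`.
-/

open MeasureTheory Metric Filter Pointwise

noncomputable section

/-- The heat kernel `G_ε(x) = ε^{−d/2} e^{−π‖x‖²/ε}`. -/
def heatKer (d : ℕ) (ε : ℝ) (x : EuclideanSpace ℝ (Fin d)) : ℝ :=
  ε ^ (-(d : ℝ) / 2) * Real.exp (-Real.pi * ‖x‖ ^ 2 / ε)

open Set Topology

theorem tendsto_measure_biUnion_Ioi_atTop {α : Type*} [MeasurableSpace α] (μ : Measure α)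
    {s : ℝ → Set α} (hs : MonotoneOn s (Ioi 0)) :
    Tendsto (fun t => μ (s t)) atTop (𝓝 (μ (⋃ t ∈ Ioi (0 : ℝ), s t))) := by
  have hpos : ∀ t : ℝ, max t 1 ∈ Ioi (0 : ℝ) := fun t => one_pos.trans_le (le_max_right t 1)
  have hmono : Monotone fun t => s (max t 1) := fun a b hab =>
    hs (hpos a) (hpos b) (max_le_max_right 1 hab)
  have hU : ⋃ t, s (max t 1) = ⋃ t ∈ Ioi (0 : ℝ), s t :=
    (iUnion_subset fun t => subset_biUnion_of_mem (u := s) (hpos t)).antisymm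
      (iUnion₂_subset fun t ht => (hs ht (hpos t) (le_max_left t 1)).trans
        (subset_iUnion (fun t => s (max t 1)) t))
  rw [← hU]
  refine (tendsto_measure_iUnion_atTop hmono).congr' ?_
  filter_upwards [eventually_ge_atTop 1] with t ht
  simp [max_eq_left ht]

section Cone

variable {V : Type*} [AddCommGroup V] [Module ℝ V] {Q : Set V}

theorem Convex.smul_subset_smul_of_le (hQ : Convex ℝ Q) (h0 : (0 : V) ∈ Q) {s t : ℝ}
    (hs : 0 < s) (hst : s ≤ t) : s • Q ⊆ t • Q := by
  rintro _ ⟨q, hq, rfl⟩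
  obtain ⟨q', hq', rfl⟩ := hQ.mem_smul_of_zero_mem h0 hq ((one_le_div hs).2 hst)
  exact ⟨q', hq', by simp only [smul_smul, mul_div_cancel₀ t hs.ne']⟩

theorem smul_biUnion_Ioi_smul {r : ℝ} (hr : 0 < r) :
    r • ⋃ s ∈ Ioi (0 : ℝ), s • Q = ⋃ s ∈ Ioi (0 : ℝ), s • Q := by
  ext v
  simp only [mem_smul_set_iff_inv_smul_mem₀ hr.ne', mem_iUnion₂, mem_Ioi]
  constructor
  · rintro ⟨s, hs, h⟩
    refine ⟨r * s, by positivity, ?_⟩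
    simpa only [smul_inv_smul₀ hr.ne', mul_smul] using smul_mem_smul_set (a := r) h
  · rintro ⟨s, hs, h⟩
    exact ⟨r⁻¹ * s, by positivity, by simpa only [mul_smul] using smul_mem_smul_set h⟩

theorem Convex.image_sub_const {P : Set V} (hP : Convex ℝ P) (x : V) : Convex ℝ ((· - x) '' P) := by
  simpa only [image_sub_right] using hP.translate_preimage_left x

theorem Convex.tendsto_measure_smul_atTop [MeasurableSpace V] (ν : Measure V) (hQ : Convex ℝ Q)
    (h0 : (0 : V) ∈ Q) :
    Tendsto (fun t : ℝ => ν (t • Q)) atTop (𝓝 (ν (⋃ s ∈ Ioi (0 : ℝ), s • Q))) :=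
  tendsto_measure_biUnion_Ioi_atTop ν fun _ hs _ _ hst => hQ.smul_subset_smul_of_le h0 hs hst

end Cone

section Haar

variable {E : Type*} [NormedAddCommGroup E] [NormedSpace ℝ E] [MeasurableSpace E] [BorelSpace E]
  [FiniteDimensional ℝ E] (μ : Measure E) [μ.IsAddHaarMeasure]

theorem measure_inter_ball_mul_measure_unitBall_of_smul_eq {K : Set E}
    (hK : ∀ r : ℝ, 0 < r → r • K = K) (R : ℝ) :
    μ (K ∩ ball 0 R) * μ (ball 0 1) = μ (ball 0 R) * μ (K ∩ ball 0 1) := by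
  rcases le_or_gt R 0 with hR | hR
  · simp [ball_eq_empty.2 hR]
  have hKR : K ∩ ball 0 R = R • (K ∩ ball 0 1) := by
    rw [smul_set_inter₀ hR.ne', hK R hR, smul_unitBall_of_pos hR]
  rw [hKR, ← smul_unitBall_of_pos hR, Measure.addHaar_smul_of_nonneg μ hR.le,
    Measure.addHaar_smul_of_nonneg μ hR.le, mul_right_comm]

theorem measure_ball_inter_div_measure_ball (P : Set E) (x : E) {r : ℝ} (hr : 0 < r) :
    (μ (ball x r ∩ P)).toReal / (μ (ball x r)).toReal
      = (μ (ball 0 1 ∩ r⁻¹ • ((· - x) '' P))).toReal / (μ (ball 0 1)).toReal := by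
  have htranslate : μ (ball x r ∩ P) = μ (ball 0 r ∩ (· - x) '' P) := by
    rw [← measure_preimage_add_right μ x]
    congr 1
    ext y
    simp [dist_eq_norm, image_sub_right]
  have hscale : ball (0 : E) r ∩ (· - x) '' P = r • (ball 0 1 ∩ r⁻¹ • ((· - x) '' P)) := by
    rw [smul_set_inter₀ hr.ne', smul_unitBall_of_pos hr, smul_inv_smul₀ hr.ne']
  rw [htranslate, hscale, Measure.addHaar_smul_of_nonneg μ hr.le,
    Measure.addHaar_ball_of_pos μ x hr, ENNReal.toReal_mul, ENNReal.toReal_mul,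
    ENNReal.toReal_ofReal (by positivity), mul_div_mul_left _ _ (by positivity)]

theorem tendsto_measure_ball_inter_div_of_mem {P : Set E} (hP : Convex ℝ P) {x : E}
    (hx : x ∈ P) :
    Tendsto (fun r => (μ (ball x r ∩ P)).toReal / (μ (ball x r)).toReal) (𝓝[>] 0)
      (𝓝 ((μ (ball 0 1 ∩ ⋃ s ∈ Ioi (0 : ℝ), s • ((· - x) '' P))).toReal
        / (μ (ball 0 1)).toReal)) := by
  have hB : μ (ball (0 : E) 1) ≠ ⊤ := measure_ball_lt_top.ne
  have hlim := (hP.image_sub_const x).tendsto_measure_smul_atTop (μ.restrict (ball 0 1))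
    ⟨x, hx, sub_self x⟩
  simp only [Measure.restrict_apply' measurableSet_ball, inter_comm _ (ball (0 : E) 1)] at hlim
  refine (((ENNReal.tendsto_toReal (measure_ne_top_of_subset inter_subset_left hB)).comp
    (hlim.comp tendsto_inv_nhdsGT_zero)).div_const _).congr' ?_
  filter_upwards [self_mem_nhdsWithin] with r hr
  exact (measure_ball_inter_div_measure_ball μ P x hr).symm

end Haar

theorem tendsto_measure_ball_inter_div_of_notMem_closure {X : Type*} [PseudoMetricSpace X]
    [MeasurableSpace X] (μ : Measure X) {P : Set X} {x : X} (hx : x ∉ closure P) :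
    Tendsto (fun r => (μ (ball x r ∩ P)).toReal / (μ (ball x r)).toReal) (𝓝[>] 0) (𝓝 0) := by
  obtain ⟨δ, hδ, hdist⟩ : ∃ δ > 0, ∀ y ∈ P, δ ≤ dist x y := by
    simpa using mt Metric.mem_closure_iff.2 hx
  refine tendsto_const_nhds.congr' ?_
  filter_upwards [Ioo_mem_nhdsGT hδ] with r hr
  have hempty : ball x r ∩ P = ∅ := eq_empty_of_forall_notMem fun y ⟨hyx, hyP⟩ =>
    (hdist y hyP).not_gt ((dist_comm x y).trans_lt (hyx.trans hr.2))
  simp [hempty]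

section Gaussian

open Real

theorem setOf_lt_exp_neg_pi_mul_norm_sq {V : Type*} [NormedAddCommGroup V] {t : ℝ}
    (ht : 0 < t) :
    {v : V | t < exp (-π * ‖v‖ ^ 2)} = ball 0 √(-log t / π) := by
  ext v
  rw [mem_ofPred_eq, mem_ball_zero_iff, ← log_lt_iff_lt_exp ht, lt_sqrt (norm_nonneg v),
    lt_div_iff₀ pi_pos]
  constructor <;> intro h <;> linarith

variable {V : Type*} [NormedAddCommGroup V] [InnerProductSpace ℝ V] [FiniteDimensional ℝ V]
  [MeasurableSpace V] [BorelSpace V]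

theorem integral_exp_neg_pi_mul_norm_sq : ∫ v : V, exp (-π * ‖v‖ ^ 2) = 1 := by
  rw [GaussianFourier.integral_rexp_neg_mul_sq_norm pi_pos, div_self pi_ne_zero, one_rpow]

variable (V) in
def gaussianMeasure : Measure V :=
  volume.withDensity fun v => ENNReal.ofReal (exp (-π * ‖v‖ ^ 2))

theorem gaussianMeasure_apply (A : Set V) :
    gaussianMeasure V A = ∫⁻ v in A, ENNReal.ofReal (exp (-π * ‖v‖ ^ 2)) :=
  withDensity_apply' _ A

instance : IsProbabilityMeasure (gaussianMeasure V) := by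
  refine ⟨?_⟩
  rw [gaussianMeasure_apply, Measure.restrict_univ, ← ofReal_integral_eq_lintegral_ofReal,
    integral_exp_neg_pi_mul_norm_sq, ENNReal.ofReal_one]
  · exact .of_integral_ne_zero (by rw [integral_exp_neg_pi_mul_norm_sq]; exact one_ne_zero)
  · exact ae_of_all _ fun v => (exp_pos _).le

theorem setIntegral_exp_neg_pi_mul_norm_sq (A : Set V) :
    ∫ v in A, exp (-π * ‖v‖ ^ 2) = (gaussianMeasure V A).toReal := by
  rw [gaussianMeasure_apply, integral_eq_lintegral_of_nonneg_ae
    (ae_of_all _ fun v => (exp_pos _).le) (by fun_prop)]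

theorem gaussianMeasure_eq_lintegral_measure_inter_ball (A : Set V) :
    gaussianMeasure V A = ∫⁻ t in Ioi 0, volume (A ∩ ball 0 √(-log t / π)) := by
  rw [gaussianMeasure_apply, lintegral_eq_lintegral_meas_lt _
    (ae_of_all _ fun v => (exp_pos _).le) (by fun_prop)]
  refine setLIntegral_congr_fun measurableSet_Ioi fun t ht => ?_
  rw [setOf_lt_exp_neg_pi_mul_norm_sq ht, Measure.restrict_apply measurableSet_ball, inter_comm]

theorem gaussianMeasure_mul_measure_unitBall_of_smul_eq {K : Set V}
    (hK : ∀ r : ℝ, 0 < r → r • K = K) :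
    gaussianMeasure V K * volume (ball (0 : V) 1) = volume (K ∩ ball 0 1) := by
  have hB : volume (ball (0 : V) 1) ≠ ⊤ := measure_ball_lt_top.ne
  have hKB : volume (K ∩ ball (0 : V) 1) ≠ ⊤ :=
    measure_ne_top_of_subset inter_subset_right hB
  calc gaussianMeasure V K * volume (ball (0 : V) 1)
      = ∫⁻ t in Ioi 0, volume (K ∩ ball 0 √(-log t / π)) * volume (ball (0 : V) 1) := by
        rw [gaussianMeasure_eq_lintegral_measure_inter_ball, lintegral_mul_const' _ _ hB]
    _ = ∫⁻ t in Ioi 0, volume (ball (0 : V) √(-log t / π)) * volume (K ∩ ball 0 1) := by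
        simp_rw [measure_inter_ball_mul_measure_unitBall_of_smul_eq volume hK]
    _ = gaussianMeasure V univ * volume (K ∩ ball 0 1) := by
        rw [gaussianMeasure_eq_lintegral_measure_inter_ball, lintegral_mul_const' _ _ hKB]
        simp only [univ_inter]
    _ = volume (K ∩ ball 0 1) := by rw [measure_univ, one_mul]

theorem setIntegral_exp_neg_pi_mul_norm_sq_of_smul_eq {K : Set V}
    (hK : ∀ r : ℝ, 0 < r → r • K = K) :
    ∫ v in K, exp (-π * ‖v‖ ^ 2)
      = (volume (ball (0 : V) 1 ∩ K)).toReal / (volume (ball (0 : V) 1)).toReal := by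
  rw [setIntegral_exp_neg_pi_mul_norm_sq, ← ENNReal.toReal_div, inter_comm,
    ← gaussianMeasure_mul_measure_unitBall_of_smul_eq hK, ENNReal.mul_div_cancel_right
      (measure_ball_pos volume 0 one_pos).ne' measure_ball_lt_top.ne]

end Gaussian

theorem tendsto_rpow_neg_mul_exp_neg_div_nhdsGT_zero (s : ℝ) {b : ℝ} (hb : 0 < b) :
    Tendsto (fun ε : ℝ => ε ^ (-s) * Real.exp (-b / ε)) (𝓝[>] 0) (𝓝 0) := by
  refine ((tendsto_rpow_mul_exp_neg_mul_atTop_nhds_zero s b hb).comp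
    tendsto_inv_nhdsGT_zero).congr' ?_
  filter_upwards [self_mem_nhdsWithin] with ε (hε : 0 < ε)
  simp only [Function.comp_apply, Real.inv_rpow hε.le, Real.rpow_neg hε.le, div_eq_mul_inv]

section HeatKernel

open Real

variable {d : ℕ}

theorem heatKer_sub_eq {ε : ℝ} (hε : 0 < ε) (x y : EuclideanSpace ℝ (Fin d)) :
    heatKer d ε (x - y) = ε ^ (-(d : ℝ) / 2) * exp (-π * ‖(√ε)⁻¹ • (y - x)‖ ^ 2) := by
  rw [heatKer, norm_smul, norm_sub_rev, norm_inv, norm_of_nonneg (sqrt_nonneg ε), mul_pow,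
    inv_pow, sq_sqrt hε.le]
  ring_nf

theorem setIntegral_heatKer_sub (P : Set (EuclideanSpace ℝ (Fin d)))
    (x : EuclideanSpace ℝ (Fin d)) {ε : ℝ} (hε : 0 < ε) :
    ∫ y in P, heatKer d ε (x - y) = ∫ v in (√ε)⁻¹ • ((· - x) '' P), exp (-π * ‖v‖ ^ 2) := by
  have hscale : ε ^ (-(d : ℝ) / 2) * ((√ε)⁻¹ ^ d)⁻¹ = 1 := by
    rw [inv_pow, inv_inv, sqrt_eq_rpow, ← rpow_natCast, ← rpow_mul hε.le, ← rpow_add hε]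
    ring_nf
    exact rpow_zero ε
  calc ∫ y in P, heatKer d ε (x - y)
      = ε ^ (-(d : ℝ) / 2) * ∫ z in (· - x) '' P, exp (-π * ‖(√ε)⁻¹ • z‖ ^ 2) := by
        rw [(measurePreserving_sub_right volume x).setIntegral_image_emb
          (measurableEmbedding_subRight x), ← integral_const_mul]
        simp_rw [heatKer_sub_eq hε]
    _ = ∫ v in (√ε)⁻¹ • ((· - x) '' P), exp (-π * ‖v‖ ^ 2) := by
        rw [Measure.setIntegral_comp_smul_of_pos volume (fun v => exp (-π * ‖v‖ ^ 2)) _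
          (by positivity), finrank_euclideanSpace_fin, smul_eq_mul, ← mul_assoc, hscale, one_mul]

theorem tendsto_setIntegral_heatKer_of_mem {P : Set (EuclideanSpace ℝ (Fin d))}
    (hP : Convex ℝ P) {x : EuclideanSpace ℝ (Fin d)} (hx : x ∈ P) :
    Tendsto (fun ε => ∫ y in P, heatKer d ε (x - y)) (𝓝[>] 0)
      (𝓝 (∫ v in ⋃ s ∈ Ioi (0 : ℝ), s • ((· - x) '' P), exp (-π * ‖v‖ ^ 2))) := by
  have hlim := (hP.image_sub_const x).tendsto_measure_smul_atTop (gaussianMeasure _)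
    ⟨x, hx, sub_self x⟩
  have hsqrt : Tendsto (fun ε : ℝ => (√ε)⁻¹) (𝓝[>] 0) atTop := by
    simpa only [Function.comp_def, sqrt_inv] using
      tendsto_sqrt_atTop.comp tendsto_inv_nhdsGT_zero
  rw [setIntegral_exp_neg_pi_mul_norm_sq]
  refine ((ENNReal.tendsto_toReal (measure_ne_top _ _)).comp (hlim.comp hsqrt)).congr' ?_
  filter_upwards [self_mem_nhdsWithin] with ε hε
  rw [Function.comp_apply, Function.comp_apply, setIntegral_heatKer_sub P x hε,
    setIntegral_exp_neg_pi_mul_norm_sq]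

theorem tendsto_setIntegral_heatKer_of_notMem_closure {P : Set (EuclideanSpace ℝ (Fin d))}
    (hPv : volume P ≠ ⊤) {x : EuclideanSpace ℝ (Fin d)} (hx : x ∉ closure P) :
    Tendsto (fun ε => ∫ y in P, heatKer d ε (x - y)) (𝓝[>] 0) (𝓝 0) := by
  obtain ⟨δ, hδ, hdist⟩ : ∃ δ > 0, ∀ y ∈ P, δ ≤ dist x y := by
    simpa using mt Metric.mem_closure_iff.2 hx
  have hbound : ∀ᶠ ε in 𝓝[>] 0, ‖∫ y in P, heatKer d ε (x - y)‖
      ≤ ε ^ (-((d : ℝ) / 2)) * exp (-(π * δ ^ 2) / ε) * volume.real P := by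
    filter_upwards [self_mem_nhdsWithin] with ε (hε : 0 < ε)
    refine norm_setIntegral_le_of_norm_le_const hPv.lt_top fun y hy => ?_
    have hδy : δ ^ 2 ≤ ‖x - y‖ ^ 2 := by
      rw [← dist_eq_norm]; gcongr; exact hdist y hy
    rw [heatKer, norm_of_nonneg (by positivity), ← neg_div, ← neg_mul]
    gcongr ?_ * exp ?_
    exact div_le_div_of_nonneg_right (by nlinarith [pi_pos]) hε.le
  refine squeeze_zero_norm' hbound ?_
  simpa using (tendsto_rpow_neg_mul_exp_neg_div_nhdsGT_zero ((d : ℝ) / 2) (b := π * δ ^ 2)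
    (by positivity)).mul_const (volume.real P)

end HeatKernel

theorem gaussian_smoothing_tendsto_solid_angle_general
    (d : ℕ) (P : Set (EuclideanSpace ℝ (Fin d)))
    (S : Finset (EuclideanSpace ℝ (Fin d)))
    (hP : P = convexHull ℝ (S : Set (EuclideanSpace ℝ (Fin d))))
    (ω : EuclideanSpace ℝ (Fin d) → ℝ)
    (hω : ∀ x : EuclideanSpace ℝ (Fin d),
      Tendsto
        (fun r : ℝ => (volume (ball x r ∩ P)).toReal / (volume (ball x r)).toReal)
        (nhdsWithin 0 (Set.Ioi 0)) (nhds (ω x))) :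
    (∀ x ∈ P,
      Tendsto (fun ε : ℝ => ∫ y in P, heatKer d ε (x - y))
        (nhdsWithin 0 (Set.Ioi 0))
        (nhds (∫ v in ⋃ s ∈ Set.Ioi (0 : ℝ), s • ((fun y => y - x) '' P),
                Real.exp (-Real.pi * ‖v‖ ^ 2)))) ∧
    (∀ x ∉ P,
      Tendsto (fun ε : ℝ => ∫ y in P, heatKer d ε (x - y))
        (nhdsWithin 0 (Set.Ioi 0)) (nhds 0)) ∧
    (∀ x : EuclideanSpace ℝ (Fin d),
      Tendsto (fun ε : ℝ => ∫ y in P, heatKer d ε (x - y))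
        (nhdsWithin 0 (Set.Ioi 0)) (nhds (ω x))) := by
  have hconv : Convex ℝ P := hP ▸ convex_convexHull ℝ _
  have hcomp : IsCompact P := hP ▸ S.finite_toSet.isCompact_convexHull ℝ
  have hclosure : closure P = P := hcomp.isClosed.closure_eq
  have hmem := fun x (hx : x ∈ P) => tendsto_setIntegral_heatKer_of_mem hconv hx
  have hnot := fun x (hx : x ∉ P) => tendsto_setIntegral_heatKer_of_notMem_closure
    hcomp.measure_lt_top.ne (hclosure.symm ▸ hx)
  refine ⟨hmem, hnot, fun x => ?_⟩
  by_cases hx : x ∈ P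
  · rw [tendsto_nhds_unique (hω x) (tendsto_measure_ball_inter_div_of_mem volume hconv hx),
      ← setIntegral_exp_neg_pi_mul_norm_sq_of_smul_eq fun r hr => smul_biUnion_Ioi_smul hr]
    exact hmem x hx
  · rw [tendsto_nhds_unique (hω x)
      (tendsto_measure_ball_inter_div_of_notMem_closure volume (hclosure.symm ▸ hx))]
    exact hnot x hx

/-- For a full-dimensional polytope `P ⊆ ℝ^d`, the Gaussian smoothing
`(1_P ∗ G_ε)(x)` converges as `ε → 0+` to the Gaussian measure of the subtended cone
when `x ∈ P`, to `0` when `x ∉ P`, and consequently to the solid angle `ω_P(x)`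
(given as the limit of ball ratios) for every `x`. -/
theorem gaussian_smoothing_tendsto_solid_angle
    (d : ℕ) (P : Set (EuclideanSpace ℝ (Fin d)))
    (S : Finset (EuclideanSpace ℝ (Fin d)))
    (hP : P = convexHull ℝ (S : Set (EuclideanSpace ℝ (Fin d))))
    (hfull : (interior P).Nonempty)
    (ω : EuclideanSpace ℝ (Fin d) → ℝ)
    (hω : ∀ x : EuclideanSpace ℝ (Fin d),
      Tendsto
        (fun r : ℝ => (volume (ball x r ∩ P)).toReal / (volume (ball x r)).toReal)
        (nhdsWithin 0 (Set.Ioi 0)) (nhds (ω x))) :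
    (∀ x ∈ P,
      Tendsto (fun ε : ℝ => ∫ y in P, heatKer d ε (x - y))
        (nhdsWithin 0 (Set.Ioi 0))
        (nhds (∫ v in ⋃ s ∈ Set.Ioi (0 : ℝ), s • ((fun y => y - x) '' P),
                Real.exp (-Real.pi * ‖v‖ ^ 2)))) ∧
    (∀ x ∉ P,
      Tendsto (fun ε : ℝ => ∫ y in P, heatKer d ε (x - y))
        (nhdsWithin 0 (Set.Ioi 0)) (nhds 0)) ∧
    (∀ x : EuclideanSpace ℝ (Fin d),
      Tendsto (fun ε : ℝ => ∫ y in P, heatKer d ε (x - y))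
        (nhdsWithin 0 (Set.Ioi 0)) (nhds (ω x))) :=
  gaussian_smoothing_tendsto_solid_angle_general d P S hP ω hω
end
end

section
/- Let P ⊆ ℝ^d be a full-dimensional polytope and let ε > 0. Then both sums below converge absolutely and the Poisson summation identity holds: Σ_{m∈ℤ^d} (1_P ∗ G_ε)(m) = Σ_{ξ∈ℤ^d} 𝓕1_P(ξ) e^{−πε‖ξ‖²}, where the left-hand side is real and the right-hand side is a sum of complex numbers equal to it. -/
open MeasureTheory Metric Filter Pointwise

noncomputable section

/-- The point of `ℝ^d` with integer coordinates `m`. -/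
def latticePt (d : ℕ) (m : Fin d → ℤ) : EuclideanSpace ℝ (Fin d) :=
  (EuclideanSpace.equiv (Fin d) ℝ).symm (fun i => (m i : ℝ))

/-- The Fourier transform of the indicator of `P`: `𝓕1_P(ξ) = ∫_P e^{−2πi⟨ξ,x⟩} dx`. -/
def fourierInd (d : ℕ) (P : Set (EuclideanSpace ℝ (Fin d)))
    (ξ : EuclideanSpace ℝ (Fin d)) : ℂ :=
  ∫ x in P, Complex.exp ((-2 * (Real.pi : ℂ) * Complex.I) * ((inner ℝ ξ x : ℝ) : ℂ))

/-!
Poisson summation for a Gaussian, in one variable (Jacobi's theta transformation), says that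
the periodization `Θ(y) = Σ_m G_ε(m - y)` of the heat kernel has the absolutely convergent
Fourier expansion `Θ(y) = Σ_ξ e^{-πε‖ξ‖²} e^{-2πi⟨ξ,y⟩}`; in dimension `d` both sides factor
over the coordinates. Integrating over `P` and exchanging sums with integrals gives the identity.
The exchanges are legitimate because `P` is compact, hence of finite volume, and both series
are dominated by the constant `Σ_ξ e^{-πε‖ξ‖²}`: the Fourier side termwise, and `Θ = |Θ|` by
the expansion itself.
-/

section PiTsum

variable {ι R : Type*} [NormedCommRing R]

theorem summable_norm_prod_pi {d : ℕ} (f : Fin d → ι → R)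
    (hf : ∀ i, Summable fun n => ‖f i n‖) :
    Summable fun m : Fin d → ι => ‖∏ i, f i (m i)‖ := by
  induction d with
  | zero => exact Summable.of_finite
  | succ d ih =>
    have hprod : Summable fun p : ι × (Fin d → ι) => ‖f 0 p.1 * ∏ i : Fin d, f i.succ (p.2 i)‖ :=
      Summable.mul_norm (f := f 0) (g := fun m : Fin d → ι => ∏ i : Fin d, f i.succ (m i))
        (hf 0) (ih (fun i => f i.succ) fun i => hf i.succ)
    refine (hprod.comp_injective (Fin.consEquiv fun _ => ι).symm.injective).congr fun m => ?_
    simp [Fin.prod_univ_succ, Fin.consEquiv, Fin.tail]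

theorem tsum_prod_pi [CompleteSpace R] {d : ℕ} (f : Fin d → ι → R)
    (hf : ∀ i, Summable fun n => ‖f i n‖) :
    ∑' m : Fin d → ι, ∏ i, f i (m i) = ∏ i, ∑' n, f i n := by
  induction d with
  | zero => simp
  | succ d ih =>
    rw [← (Fin.consEquiv fun _ => ι).tsum_eq, Fin.prod_univ_succ,
      ← ih (fun i => f i.succ) fun i => hf i.succ, tsum_mul_tsum_of_summable_norm (hf 0)
        (summable_norm_prod_pi (fun i => f i.succ) fun i => hf i.succ)]
    simp [Fin.prod_univ_succ, Fin.consEquiv]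

end PiTsum

theorem hasSum_integral_of_tsum_norm_le {α ι E : Type*} [MeasurableSpace α] {μ : Measure α}
    [IsFiniteMeasure μ] [Countable ι] [NormedAddCommGroup E] [NormedSpace ℝ E] [CompleteSpace E]
    {F : ι → α → E} {C : ℝ} (hF : ∀ i, AEStronglyMeasurable (F i) μ)
    (hs : ∀ a, Summable fun i => ‖F i a‖) (hC : ∀ a, ∑' i, ‖F i a‖ ≤ C) :
    HasSum (fun i => ∫ a, F i a ∂μ) (∫ a, ∑' i, F i a ∂μ) := by
  have hfin : ∑' i, ∫⁻ a, ‖F i a‖ₑ ∂μ ≠ ⊤ := by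
    rw [← lintegral_tsum fun i => (hF i).enorm]
    refine ne_top_of_le_ne_top (lintegral_const_lt_top (ENNReal.ofReal_ne_top (r := C))).ne
      (lintegral_mono fun a => ?_)
    simp only [← ofReal_norm]
    rw [← ENNReal.ofReal_tsum_of_nonneg (fun i => norm_nonneg _) (hs a)]
    exact ENNReal.ofReal_le_ofReal (hC a)
  rw [integral_tsum hF hfin]
  refine Summable.hasSum (.of_norm_bounded (ENNReal.summable_toReal hfin) fun i => ?_)
  simpa only [ofReal_norm] using norm_integral_le_lintegral_norm (F i)

open Complex Real

theorem summable_exp_neg_mul_sq_add_mul_int {a : ℝ} (ha : 0 < a) (b : ℝ) :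
    Summable fun n : ℤ => rexp (-a * n ^ 2 + b * n) := by
  -- these are the terms of Jacobi's `θ₂(z, τ)` at `z = -ib/(2π)`, `τ = ia/π`
  have hθ := (summable_jacobiTheta₂_term_iff (-b / (2 * π) * I) (a / π * I)).mpr
    (by simpa using div_pos ha pi_pos)
  rw [← summable_ofReal]
  refine hθ.congr fun n => ?_
  have hπ : (π : ℂ) ≠ 0 := ofReal_ne_zero.mpr pi_ne_zero
  rw [jacobiTheta₂_term, ofReal_exp]
  congr 1
  push_cast
  field_simp
  ring_nf
  rw [I_sq]
  ring

theorem summable_exp_neg_pi_mul_int_sq {a : ℝ} (ha : 0 < a) :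
    Summable fun n : ℤ => rexp (-π * a * n ^ 2) :=
  (summable_exp_neg_mul_sq_add_mul_int (mul_pos pi_pos ha) 0).congr fun n => by ring_nf

theorem norm_cexp_neg_two_pi_I_mul (x : ℝ) : ‖cexp (-2 * π * I * x)‖ = 1 := by
  simpa [mul_comm, mul_left_comm, mul_assoc] using norm_exp_ofReal_mul_I (-2 * π * x)

def gaussKer (ε t : ℝ) : ℝ := ε ^ (-(1 : ℝ) / 2) * rexp (-π * t ^ 2 / ε)

theorem summable_gaussKer_int_sub {ε : ℝ} (hε : 0 < ε) (t : ℝ) :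
    Summable fun n : ℤ => gaussKer ε (n - t) := by
  refine .mul_left _ <| ((summable_exp_neg_mul_sq_add_mul_int (div_pos pi_pos hε)
    (2 * π * t / ε)).mul_left (rexp (-π * t ^ 2 / ε))).congr fun n => ?_
  rw [← Real.exp_add]
  congr 1
  field_simp
  ring

theorem ofReal_tsum_gaussKer_int_sub {ε : ℝ} (hε : 0 < ε) (t : ℝ) :
    ((∑' n : ℤ, gaussKer ε (n - t) : ℝ) : ℂ) =
      ∑' n : ℤ, (rexp (-π * ε * n ^ 2) : ℂ) * cexp (-2 * π * I * (n * t : ℝ)) := by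
  have hε' : ((ε ^ (-(1 : ℝ) / 2) : ℝ) : ℂ) = 1 / (ε : ℂ) ^ (1 / 2 : ℂ) := by
    rw [ofReal_cpow hε.le, one_div, ← cpow_neg]
    norm_num
  -- Poisson summation for the Gaussian, after the reflection `n ↦ -n`
  calc ((∑' n : ℤ, gaussKer ε (n - t) : ℝ) : ℂ)
      = 1 / (ε : ℂ) ^ (1 / 2 : ℂ) * ∑' n : ℤ, cexp (-π / ε * (n + I * (-I * t)) ^ 2) := by
        rw [ofReal_tsum, ← (Equiv.neg ℤ).tsum_eq, ← tsum_mul_left]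
        refine tsum_congr fun n => ?_
        rw [gaussKer, ofReal_mul, hε', ofReal_exp, ← mul_neg_one I, mul_assoc, ← mul_assoc I,
          I_mul_I, Equiv.neg_apply]
        push_cast
        ring_nf
    _ = ∑' n : ℤ, cexp (-π * ε * n ^ 2 + 2 * π * (-I * t) * n) :=
        (tsum_exp_neg_quadratic (by simpa using hε) _).symm
    _ = _ := tsum_congr fun n => by
        rw [ofReal_exp, ← Complex.exp_add]
        push_cast
        ring_nf

@[simp]
theorem latticePt_apply (d : ℕ) (m : Fin d → ℤ) (i : Fin d) : latticePt d m i = m i := rfl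

theorem norm_latticePt_sq (d : ℕ) (m : Fin d → ℤ) : ‖latticePt d m‖ ^ 2 = ∑ i, (m i : ℝ) ^ 2 := by
  simp [EuclideanSpace.norm_sq_eq]

theorem inner_latticePt (d : ℕ) (m : Fin d → ℤ) (y : EuclideanSpace ℝ (Fin d)) :
    inner ℝ (latticePt d m) y = ∑ i, (m i : ℝ) * y i := by
  simp [PiLp.inner_apply, mul_comm]

theorem heatKer_eq_prod_gaussKer (d : ℕ) {ε : ℝ} (hε : 0 < ε) (x : EuclideanSpace ℝ (Fin d)) :
    heatKer d ε x = ∏ i, gaussKer ε (x i) := by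
  simp only [heatKer, gaussKer]
  rw [Finset.prod_mul_distrib, Finset.prod_const, Finset.card_univ, Fintype.card_fin,
    ← Real.rpow_mul_natCast hε.le, ← Real.exp_sum, EuclideanSpace.norm_sq_eq, Finset.mul_sum,
    Finset.sum_div]
  simp only [Real.norm_eq_abs, sq_abs]
  congr 2
  · ring

theorem heatKer_nonneg (d : ℕ) {ε : ℝ} (hε : 0 ≤ ε) (x : EuclideanSpace ℝ (Fin d)) :
    0 ≤ heatKer d ε x := by
  unfold heatKer; positivity

theorem continuous_heatKer (d : ℕ) (ε : ℝ) : Continuous (heatKer d ε) := by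
  unfold heatKer; fun_prop

theorem summable_heatKer_latticePt_sub (d : ℕ) {ε : ℝ} (hε : 0 < ε)
    (y : EuclideanSpace ℝ (Fin d)) :
    Summable fun m : Fin d → ℤ => heatKer d ε (latticePt d m - y) := by
  have hnorm : ∀ i, Summable fun n : ℤ => ‖gaussKer ε (n - y i)‖ := fun i =>
    (summable_gaussKer_int_sub hε (y i)).norm
  refine (summable_norm_prod_pi _ hnorm).of_norm.congr fun m => ?_
  rw [heatKer_eq_prod_gaussKer d hε]
  rfl

theorem summable_exp_neg_mul_norm_latticePt_sq (d : ℕ) {ε : ℝ} (hε : 0 < ε) :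
    Summable fun ξ : Fin d → ℤ => rexp (-π * ε * ‖latticePt d ξ‖ ^ 2) := by
  have hnorm : ∀ _ : Fin d, Summable fun n : ℤ => ‖rexp (-π * ε * n ^ 2)‖ := fun _ =>
    (summable_exp_neg_pi_mul_int_sq hε).norm
  refine (summable_norm_prod_pi _ hnorm).of_norm.congr fun ξ => ?_
  rw [← Real.exp_sum, norm_latticePt_sq, Finset.mul_sum]

/-- The `ξ`-th term of the Fourier series of the periodized heat kernel. -/
def gaussWave (d : ℕ) (ε : ℝ) (ξ : Fin d → ℤ) (y : EuclideanSpace ℝ (Fin d)) : ℂ :=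
  (rexp (-π * ε * ‖latticePt d ξ‖ ^ 2) : ℂ) *
    cexp ((-2 * (π : ℂ) * I) * ((inner ℝ (latticePt d ξ) y : ℝ) : ℂ))

theorem norm_gaussWave (d : ℕ) (ε : ℝ) (ξ : Fin d → ℤ) (y : EuclideanSpace ℝ (Fin d)) :
    ‖gaussWave d ε ξ y‖ = rexp (-π * ε * ‖latticePt d ξ‖ ^ 2) := by
  rw [gaussWave, norm_mul, norm_cexp_neg_two_pi_I_mul, mul_one, norm_real, norm_of_nonneg
    (Real.exp_pos _).le]

theorem continuous_gaussWave (d : ℕ) (ε : ℝ) (ξ : Fin d → ℤ) : Continuous (gaussWave d ε ξ) := by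
  unfold gaussWave; fun_prop

theorem gaussWave_eq_prod (d : ℕ) (ε : ℝ) (ξ : Fin d → ℤ) (y : EuclideanSpace ℝ (Fin d)) :
    gaussWave d ε ξ y =
      ∏ i, (rexp (-π * ε * (ξ i) ^ 2) : ℂ) * cexp (-2 * π * I * ((ξ i : ℝ) * y i : ℝ)) := by
  rw [gaussWave, Finset.prod_mul_distrib, ← ofReal_prod, ← Real.exp_sum, ← Complex.exp_sum,
    norm_latticePt_sq, inner_latticePt, Finset.mul_sum, ofReal_sum, Finset.mul_sum]

theorem ofReal_tsum_heatKer_latticePt_sub (d : ℕ) {ε : ℝ} (hε : 0 < ε)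
    (y : EuclideanSpace ℝ (Fin d)) :
    ((∑' m : Fin d → ℤ, heatKer d ε (latticePt d m - y) : ℝ) : ℂ) =
      ∑' ξ : Fin d → ℤ, gaussWave d ε ξ y := by
  have hKer : ∀ i, Summable fun n : ℤ => ‖gaussKer ε (n - y i)‖ := fun i =>
    (summable_gaussKer_int_sub hε (y i)).norm
  have hWave : ∀ i, Summable fun n : ℤ =>
      ‖(rexp (-π * ε * n ^ 2) : ℂ) * cexp (-2 * π * I * ((n : ℝ) * y i : ℝ))‖ := fun i => by
    simpa only [norm_mul, norm_cexp_neg_two_pi_I_mul, mul_one, norm_real]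
      using (summable_exp_neg_pi_mul_int_sq hε).norm
  calc ((∑' m : Fin d → ℤ, heatKer d ε (latticePt d m - y) : ℝ) : ℂ)
      = ((∏ i, ∑' n : ℤ, gaussKer ε (n - y i) : ℝ) : ℂ) := by
        rw [← tsum_prod_pi _ hKer]
        exact congrArg _ (tsum_congr fun m => heatKer_eq_prod_gaussKer d hε _)
    _ = ∏ i, ∑' n : ℤ,
          (rexp (-π * ε * n ^ 2) : ℂ) * cexp (-2 * π * I * ((n : ℝ) * y i : ℝ)) := by
        rw [ofReal_prod]
        exact Finset.prod_congr rfl fun i _ => ofReal_tsum_gaussKer_int_sub hε (y i)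
    _ = ∑' ξ : Fin d → ℤ, gaussWave d ε ξ y := by
        rw [← tsum_prod_pi _ hWave]
        exact tsum_congr fun ξ => (gaussWave_eq_prod d ε ξ y).symm

theorem tsum_heatKer_latticePt_sub_le (d : ℕ) {ε : ℝ} (hε : 0 < ε)
    (y : EuclideanSpace ℝ (Fin d)) :
    ∑' m : Fin d → ℤ, heatKer d ε (latticePt d m - y) ≤
      ∑' ξ : Fin d → ℤ, rexp (-π * ε * ‖latticePt d ξ‖ ^ 2) := by
  have h := norm_tsum_le_tsum_norm (f := fun ξ => gaussWave d ε ξ y) (by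
    simpa only [norm_gaussWave] using summable_exp_neg_mul_norm_latticePt_sq d hε)
  rw [← ofReal_tsum_heatKer_latticePt_sub d hε, norm_real] at h
  simpa only [norm_gaussWave] using (le_abs_self _).trans h

theorem integral_gaussWave (d : ℕ) (P : Set (EuclideanSpace ℝ (Fin d))) (ε : ℝ)
    (ξ : Fin d → ℤ) :
    ∫ y in P, gaussWave d ε ξ y =
      fourierInd d P (latticePt d ξ) * (rexp (-π * ε * ‖latticePt d ξ‖ ^ 2) : ℂ) := by
  rw [mul_comm, fourierInd, ← integral_const_mul]
  rfl

theorem poisson_summation_for_smoothed_indicator_general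
    (d : ℕ) (P : Set (EuclideanSpace ℝ (Fin d)))
    (S : Finset (EuclideanSpace ℝ (Fin d)))
    (hP : P = convexHull ℝ (S : Set (EuclideanSpace ℝ (Fin d))))
    (ε : ℝ) (hε : 0 < ε) :
    Summable (fun m : Fin d → ℤ => ∫ y in P, heatKer d ε (latticePt d m - y)) ∧
    Summable (fun ξ : Fin d → ℤ =>
      fourierInd d P (latticePt d ξ) *
        (Real.exp (-Real.pi * ε * ‖latticePt d ξ‖ ^ 2) : ℂ)) ∧
    ((∑' m : Fin d → ℤ, ∫ y in P, heatKer d ε (latticePt d m - y) : ℝ) : ℂ) =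
      ∑' ξ : Fin d → ℤ,
        fourierInd d P (latticePt d ξ) *
          (Real.exp (-Real.pi * ε * ‖latticePt d ξ‖ ^ 2) : ℂ) := by
  have : IsFiniteMeasure (volume.restrict P) := isFiniteMeasure_restrict.2
    (hP ▸ S.finite_toSet.isCompact_convexHull ℝ).measure_ne_top
  set C := ∑' ξ : Fin d → ℤ, rexp (-π * ε * ‖latticePt d ξ‖ ^ 2)
  have hHeat : HasSum (fun m : Fin d → ℤ => ∫ y in P, heatKer d ε (latticePt d m - y))
      (∫ y in P, ∑' m : Fin d → ℤ, heatKer d ε (latticePt d m - y)) := by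
    refine hasSum_integral_of_tsum_norm_le (C := C)
      (fun m => (continuous_heatKer d ε |>.comp (by fun_prop)).aestronglyMeasurable)
      (fun y => (summable_heatKer_latticePt_sub d hε y).norm) fun y => ?_
    simpa only [norm_of_nonneg (heatKer_nonneg d hε.le _)]
      using tsum_heatKer_latticePt_sub_le d hε y
  have hWave : HasSum (fun ξ : Fin d → ℤ => ∫ y in P, gaussWave d ε ξ y)
      (∫ y in P, ∑' ξ : Fin d → ℤ, gaussWave d ε ξ y) :=
    hasSum_integral_of_tsum_norm_le (C := C)
      (fun ξ => (continuous_gaussWave d ε ξ).aestronglyMeasurable)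
      (by simpa only [norm_gaussWave] using fun _ => summable_exp_neg_mul_norm_latticePt_sq d hε)
      (fun y => (tsum_congr fun ξ => norm_gaussWave d ε ξ y).le)
  simp only [integral_gaussWave] at hWave
  refine ⟨hHeat.summable, hWave.summable, ?_⟩
  rw [hHeat.tsum_eq, hWave.tsum_eq, ← integral_complex_ofReal]
  exact integral_congr_ae (ae_of_all _ (ofReal_tsum_heatKer_latticePt_sub d hε))

/-- Poisson summation for the Gaussian smoothing of the indicator of a
full-dimensional polytope: both sums converge absolutely, and
`Σ_{m∈ℤ^d} (1_P ∗ G_ε)(m) = Σ_{ξ∈ℤ^d} 𝓕1_P(ξ) e^{−πε‖ξ‖²}`. -/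
theorem poisson_summation_for_smoothed_indicator
    (d : ℕ) (P : Set (EuclideanSpace ℝ (Fin d)))
    (S : Finset (EuclideanSpace ℝ (Fin d)))
    (hP : P = convexHull ℝ (S : Set (EuclideanSpace ℝ (Fin d))))
    (hfull : (interior P).Nonempty)
    (ε : ℝ) (hε : 0 < ε) :
    Summable (fun m : Fin d → ℤ => ∫ y in P, heatKer d ε (latticePt d m - y)) ∧
    Summable (fun ξ : Fin d → ℤ =>
      fourierInd d P (latticePt d ξ) *
        (Real.exp (-Real.pi * ε * ‖latticePt d ξ‖ ^ 2) : ℂ)) ∧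
    ((∑' m : Fin d → ℤ, ∫ y in P, heatKer d ε (latticePt d m - y) : ℝ) : ℂ) =
      ∑' ξ : Fin d → ℤ,
        fourierInd d P (latticePt d ξ) *
          (Real.exp (-Real.pi * ε * ‖latticePt d ξ‖ ^ 2) : ℂ) :=
  poisson_summation_for_smoothed_indicator_general d P S hP ε hε
end
end
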